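/- Let D(X) ⊆ (0,X] be a set of integers with counting function A(u) = cu + O(u^{1/2}), c > 0. Fix τ ∈ ℝ, τ ≠ 0, M > 0, and set R = log(√M X/(2πe)). Then ∑_{d ∈ D(X)} (√M d/(2π))^{-2πiτ/R} = A(X)·e^{-2πiτ − 2πiτ/R}·(1 − 2πiτ/R)^{-1} + O(X^{1/2}). -/

import Mathlib

/-!
Put `s = 2πiτ/R`, a purely imaginary number with `|s| ≤ 1` for large `X`, and `B = √M/(2π)`.
Since `log (B X) = R + 1`, the main term is `A(X) (B X)^{-s} (1 - s)⁻¹`, and as `|B^{-s}| = 1` it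
suffices to show `∑_{d ∈ 𝒟, d ≤ X} d^{-s} = A(X) X^{-s} (1 - s)⁻¹ + O(√X)` uniformly in such `s`.
Split `1_𝒟 = c + e`, where the partial sums `E(n)` of `e` are `O(√n)`. Comparing with
`∫₀^X t^{-s} dt` gives `c ∑_{d ≤ X} d^{-s} = c X^{1-s}/(1 - s) + O(1 + |s| log X)`; summation by
parts together with `|(n+1)^{-s} - n^{-s}| ≤ |s|/n` gives `∑_{d ≤ X} e(d) d^{-s} = O(√X)`; and
`c X^{1-s} = (A(X) - E(X)) X^{-s}`.
-/

open Real Filter Asymptotics Classical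

open Finset

-- The `n = 0` term is `(√0)⁻¹ = 0`.
lemma sum_range_inv_sqrt_le (N : ℕ) : ∑ n ∈ range N, (√n)⁻¹ ≤ 2 * √N := by
  have hsucc : ∀ N : ℕ, ∑ n ∈ range (N + 1), (√n)⁻¹ ≤ 2 * √N := by
    intro N
    induction N with
    | zero => simp
    | succ N ih =>
      have hpos : (0 : ℝ) < √(N + 1 : ℕ) := by positivity
      have hstep : (√(N + 1 : ℕ))⁻¹ ≤ 2 * (√(N + 1 : ℕ) - √N) := by
        rw [inv_le_iff_one_le_mul₀' hpos]
        have h₁ := sq_sqrt (Nat.cast_nonneg (α := ℝ) N)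
        have h₂ := sq_sqrt (Nat.cast_nonneg (α := ℝ) (N + 1))
        push_cast at h₂ ⊢
        nlinarith [sq_nonneg (√((N : ℝ) + 1) - √N)]
      rw [sum_range_succ]
      linarith
  calc ∑ n ∈ range N, (√n)⁻¹ ≤ ∑ n ∈ range (N + 1), (√n)⁻¹ :=
        sum_le_sum_of_subset_of_nonneg (range_subset_range.2 N.le_succ) fun _ _ _ => by positivity
    _ ≤ 2 * √N := hsucc N

lemma log_add_one_sub_log_le {x : ℝ} (hx : 0 < x) : log (x + 1) - log x ≤ x⁻¹ := by
  have h := log_le_sub_one_of_pos (div_pos (by linarith : 0 < x + 1) hx)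
  rwa [log_div (by linarith) hx.ne', add_div, div_self hx.ne', add_sub_cancel_left, one_div] at h

lemma log_le_two_mul_sqrt {x : ℝ} (hx : 0 ≤ x) : log x ≤ 2 * √x :=
  calc log x ≤ x ^ (1 / 2 : ℝ) / (1 / 2) := log_le_rpow_div hx (by norm_num)
    _ = 2 * √x := by rw [← sqrt_eq_rpow]; ring

theorem sum_Icc_mul_eq_sub_sum_range {R : Type*} [CommRing R] (a g : ℕ → R) (X : ℕ) :
    ∑ d ∈ Icc 1 X, a d * g d =
      (∑ d ∈ Icc 1 X, a d) * g X - ∑ n ∈ range X, (∑ d ∈ Icc 1 n, a d) * (g (n + 1) - g n) := by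
  induction X with
  | zero => simp
  | succ X ih =>
    rw [sum_Icc_succ_top (by omega), sum_Icc_succ_top (by omega), sum_range_succ, ih]
    ring

lemma norm_sum_Icc_mul_le_of_partial_sums (a g : ℕ → ℂ) {C L : ℝ} {X : ℕ} (hL : 0 ≤ L)
    (ha : ∀ n : ℕ, ‖∑ d ∈ Icc 1 n, a d‖ ≤ C * √n) (hgX : ‖g X‖ ≤ 1)
    (hg : ∀ n : ℕ, 0 < n → ‖g (n + 1) - g n‖ ≤ L / n) :
    ‖∑ d ∈ Icc 1 X, a d * g d‖ ≤ C * (1 + 2 * L) * √X := by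
  have hC : 0 ≤ C := (norm_nonneg _).trans (by simpa using ha 1)
  have hterm : ∀ n ∈ range X,
      ‖(∑ d ∈ Icc 1 n, a d) * (g (n + 1) - g n)‖ ≤ C * L * (√n)⁻¹ := by
    intro n _
    rcases n.eq_zero_or_pos with rfl | hn
    · simp
    calc _ ≤ C * √n * (L / n) := by
          rw [norm_mul]; exact mul_le_mul (ha n) (hg n hn) (norm_nonneg _) (by positivity)
      _ = C * L * (√n / n) := by ring
      _ = C * L * (√n)⁻¹ := by rw [sqrt_div_self', one_div]
  rw [sum_Icc_mul_eq_sub_sum_range]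
  calc _ ≤ C * √X * 1 + C * L * (2 * √X) := by
        refine (norm_sub_le _ _).trans (add_le_add ?_ ?_)
        · rw [norm_mul]; exact mul_le_mul (ha X) hgX (norm_nonneg _) (by positivity)
        · refine (norm_sum_le _ _).trans ((sum_le_sum hterm).trans ?_)
          rw [← mul_sum]
          exact mul_le_mul_of_nonneg_left (sum_range_inv_sqrt_le X) (by positivity)
    _ = C * (1 + 2 * L) * √X := by ring

section PurelyImaginaryExponent

variable {s : ℂ}

lemma norm_ofReal_cpow_neg_of_re_eq_zero (hs : s.re = 0) {u : ℝ} (hu : 0 < u) :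
    ‖(u : ℂ) ^ (-s)‖ = 1 := by
  rw [Complex.norm_cpow_eq_rpow_re_of_pos hu, Complex.neg_re, hs, neg_zero, rpow_zero]

lemma norm_inv_one_sub_le_one_of_re_eq_zero (hs : s.re = 0) : ‖(1 - s)⁻¹‖ ≤ 1 := by
  rw [norm_inv]
  exact inv_le_one_of_one_le₀ (by simpa [hs] using Complex.abs_re_le_norm (1 - s))

lemma norm_ofReal_cpow_neg_sub_le (hs : s.re = 0) {u v : ℝ} (hu : 0 < u) (hv : 0 < v) :
    ‖(v : ℂ) ^ (-s) - (u : ℂ) ^ (-s)‖ ≤ ‖s‖ * |log v - log u| := by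
  have hpow : ∀ w : ℝ, 0 < w →
      (w : ℂ) ^ (-s) = Complex.exp (Complex.I * ((-s.im * log w : ℝ) : ℂ)) := by
    intro w hw
    rw [Complex.cpow_def_of_ne_zero (by exact_mod_cast hw.ne'), ← Complex.ofReal_log hw.le]
    congr 1
    apply Complex.ext <;> simp [hs, mul_comm]
  rw [hpow v hv, hpow u hu]
  calc _ = ‖Complex.exp (Complex.I * ((-s.im * log u : ℝ) : ℂ)) *
          (Complex.exp (Complex.I * ((-s.im * (log v - log u) : ℝ) : ℂ)) - 1)‖ := by
        rw [mul_sub, mul_one, ← Complex.exp_add]; push_cast; ring_nf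
    _ ≤ ‖-s.im * (log v - log u)‖ := by
        rw [norm_mul, Complex.norm_exp_I_mul_ofReal, one_mul]
        exact Real.norm_exp_I_mul_ofReal_sub_one_le
    _ ≤ ‖s‖ * |log v - log u| := by
        rw [Real.norm_eq_abs, abs_mul, abs_neg]
        gcongr
        exact Complex.abs_im_le_norm s

lemma integral_ofReal_cpow_neg (hs : s.re = 0) (x : ℝ) :
    ∫ t in (0 : ℝ)..x, (t : ℂ) ^ (-s) = (x : ℂ) ^ (1 - s) / (1 - s) := by
  have h1s : 1 - s ≠ 0 := fun h => by simpa [hs] using congrArg Complex.re h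
  rw [integral_cpow (Or.inl (by simp [hs])), neg_add_eq_sub, Complex.ofReal_zero,
    Complex.zero_cpow h1s, sub_zero]

lemma norm_ofReal_cpow_sub_intervalIntegral_le (hs : s.re = 0) {x : ℝ} (hx : 0 < x) :
    ‖((x + 1 : ℝ) : ℂ) ^ (-s) - ∫ t in x..x + 1, (t : ℂ) ^ (-s)‖ ≤
      ‖s‖ * (log (x + 1) - log x) := by
  have hconst : ((x + 1 : ℝ) : ℂ) ^ (-s) = ∫ _ in x..x + 1, ((x + 1 : ℝ) : ℂ) ^ (-s) := by
    simp
  rw [hconst, ← intervalIntegral.integral_sub intervalIntegrable_const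
    (intervalIntegral.intervalIntegrable_cpow' (by simp [hs]))]
  refine (intervalIntegral.norm_integral_le_of_norm_le_const
    (C := ‖s‖ * (log (x + 1) - log x)) fun t ht => ?_).trans_eq (by simp)
  rw [Set.uIoc_of_le (by linarith)] at ht
  have ht0 : 0 < t := hx.trans ht.1
  calc _ ≤ ‖s‖ * |log (x + 1) - log t| := norm_ofReal_cpow_neg_sub_le hs ht0 (by positivity)
    _ ≤ ‖s‖ * (log (x + 1) - log x) := by
        rw [abs_of_nonneg (sub_nonneg.2 (log_le_log ht0 ht.2))]
        gcongr
        exact ht.1.le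

lemma norm_sum_Icc_cpow_neg_sub_le (hs : s.re = 0) (X : ℕ) :
    ‖∑ d ∈ Icc 1 X, (d : ℂ) ^ (-s) - (X : ℂ) ^ (1 - s) / (1 - s)‖ ≤ 2 + ‖s‖ * log X := by
  have hsum : ∑ d ∈ Icc 1 X, (d : ℂ) ^ (-s) = ∑ k ∈ range X, (((k + 1 : ℕ) : ℝ) : ℂ) ^ (-s) := by
    rw [← Ico_add_one_right_eq_Icc, sum_Ico_eq_sum_range]
    simp [add_comm]
  have hint : (X : ℂ) ^ (1 - s) / (1 - s) =
      ∑ k ∈ range X, ∫ t in (k : ℝ)..((k + 1 : ℕ) : ℝ), (t : ℂ) ^ (-s) := by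
    rw [intervalIntegral.sum_integral_adjacent_intervals (a := fun k : ℕ => (k : ℝ))
      fun _ _ => intervalIntegral.intervalIntegrable_cpow' (by simp [hs]),
      Nat.cast_zero, integral_ofReal_cpow_neg hs, Complex.ofReal_natCast]
  rw [hsum, hint, ← sum_sub_distrib]
  rcases X with _ | Y
  · simp
  -- On `[0, 1]` the logarithmic bound is useless; there both terms have norm at most `1`.
  have hfirst : ‖(((0 + 1 : ℕ) : ℝ) : ℂ) ^ (-s) -
      ∫ t in ((0 : ℕ) : ℝ)..((0 + 1 : ℕ) : ℝ), (t : ℂ) ^ (-s)‖ ≤ 2 := by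
    rw [zero_add, Nat.cast_zero, Nat.cast_one, integral_ofReal_cpow_neg hs, Complex.ofReal_one,
      Complex.one_cpow, Complex.one_cpow, one_div]
    refine (norm_sub_le _ _).trans ?_
    linarith [norm_inv_one_sub_le_one_of_re_eq_zero hs, norm_one (α := ℂ)]
  have htel : ∑ k ∈ range Y, (log ((k : ℝ) + 1 + 1) - log ((k : ℝ) + 1)) = log (Y + 1) := by
    simpa using sum_range_sub (fun k : ℕ => log ((k : ℝ) + 1)) Y
  rw [sum_range_succ']
  calc _ ≤ ∑ k ∈ range Y, ‖s‖ * (log ((k : ℝ) + 1 + 1) - log ((k : ℝ) + 1)) + 2 := by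
        refine (norm_add_le _ _).trans
          (add_le_add ((norm_sum_le _ _).trans (sum_le_sum fun k _ => ?_)) hfirst)
        have := norm_ofReal_cpow_sub_intervalIntegral_le hs (x := ((k + 1 : ℕ) : ℝ))
          (by positivity)
        push_cast at this ⊢
        exact this
    _ = 2 + ‖s‖ * log (Y + 1 : ℕ) := by
        rw [← mul_sum, htel]
        push_cast
        ring

theorem norm_sum_mul_cpow_neg_sub_le (a : ℕ → ℂ) (c : ℂ) {C : ℝ}
    (ha : ∀ n : ℕ, ‖∑ d ∈ Icc 1 n, a d - c * n‖ ≤ C * √n) (hs : s.re = 0) {X : ℕ}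
    (hX : 1 ≤ X) :
    ‖∑ d ∈ Icc 1 X, a d * (d : ℂ) ^ (-s) - (∑ d ∈ Icc 1 X, a d) * (X : ℂ) ^ (-s) * (1 - s)⁻¹‖ ≤
      (2 + 2 * ‖s‖) * (‖c‖ + C) * √X := by
  set e : ℕ → ℂ := fun d => a d - c
  have he : ∀ n, ∑ d ∈ Icc 1 n, e d = ∑ d ∈ Icc 1 n, a d - c * n := by
    intro n; simp [e, sum_sub_distrib, mul_comm]
  have hXpos : (0 : ℝ) < X := by exact_mod_cast hX
  have hpow : (X : ℂ) ^ (1 - s) = X * (X : ℂ) ^ (-s) := by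
    rw [sub_eq_add_neg, Complex.cpow_add _ _ (by exact_mod_cast hXpos.ne'), Complex.cpow_one]
  have hunit : ∀ n : ℕ, 0 < n → ‖(n : ℂ) ^ (-s)‖ = 1 := fun n hn => by
    simpa using norm_ofReal_cpow_neg_of_re_eq_zero hs (u := n) (by exact_mod_cast hn)
  have hsplit : ∑ d ∈ Icc 1 X, a d * (d : ℂ) ^ (-s) -
        (∑ d ∈ Icc 1 X, a d) * (X : ℂ) ^ (-s) * (1 - s)⁻¹ =
      c * (∑ d ∈ Icc 1 X, (d : ℂ) ^ (-s) - (X : ℂ) ^ (1 - s) / (1 - s)) +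
        ∑ d ∈ Icc 1 X, e d * (d : ℂ) ^ (-s) -
        (∑ d ∈ Icc 1 X, e d) * (X : ℂ) ^ (-s) * (1 - s)⁻¹ := by
    rw [he, hpow]
    simp only [e, sub_mul, sum_sub_distrib, ← mul_sum]
    ring
  have hmain : ‖c * (∑ d ∈ Icc 1 X, (d : ℂ) ^ (-s) - (X : ℂ) ^ (1 - s) / (1 - s))‖ ≤
      ‖c‖ * ((2 + 2 * ‖s‖) * √X) := by
    rw [norm_mul]
    refine mul_le_mul_of_nonneg_left ((norm_sum_Icc_cpow_neg_sub_le hs X).trans ?_)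
      (norm_nonneg _)
    have h1 : 1 ≤ √(X : ℝ) := one_le_sqrt.2 (by exact_mod_cast hX)
    nlinarith [log_le_two_mul_sqrt hXpos.le, norm_nonneg s]
  have hfluct : ‖∑ d ∈ Icc 1 X, e d * (d : ℂ) ^ (-s)‖ ≤ C * (1 + 2 * ‖s‖) * √X := by
    refine norm_sum_Icc_mul_le_of_partial_sums e _ (norm_nonneg s) (fun n => he n ▸ ha n)
      (hunit X hX).le fun n hn => ?_
    have hn' : (0 : ℝ) < n := by exact_mod_cast hn
    have h := norm_ofReal_cpow_neg_sub_le hs hn' (by positivity : (0 : ℝ) < n + 1)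
    push_cast at h ⊢
    rw [abs_of_nonneg (sub_nonneg.2 (log_le_log hn' (by linarith)))] at h
    refine h.trans ?_
    rw [div_eq_mul_inv]
    gcongr
    exact log_add_one_sub_log_le hn'
  have hrem : ‖(∑ d ∈ Icc 1 X, e d) * (X : ℂ) ^ (-s) * (1 - s)⁻¹‖ ≤ C * √X := by
    rw [norm_mul, norm_mul, hunit X hX, mul_one, he]
    exact (mul_le_of_le_one_right (norm_nonneg _)
      (norm_inv_one_sub_le_one_of_re_eq_zero hs)).trans (ha X)
  rw [hsplit]
  calc _ ≤ ‖c‖ * ((2 + 2 * ‖s‖) * √X) + C * (1 + 2 * ‖s‖) * √X + C * √X :=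
        (norm_sub_le _ _).trans
          (add_le_add ((norm_add_le _ _).trans (add_le_add hmain hfluct)) hrem)
    _ = (2 + 2 * ‖s‖) * (‖c‖ + C) * √X := by ring

end PurelyImaginaryExponent

lemma norm_sum_Icc_indicator_sub_le {𝒟 : Set ℕ} {c C : ℝ}
    (h : ∀ u : ℕ, 1 ≤ u →
      |((((Icc 1 u).filter (· ∈ 𝒟)).card : ℝ) - c * u)| ≤ C * (u : ℝ) ^ ((1 : ℝ) / 2))
    (n : ℕ) : ‖∑ d ∈ Icc 1 n, (𝒟.indicator 1 d : ℂ) - c * n‖ ≤ C * √n := by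
  rcases n.eq_zero_or_pos with rfl | hn
  · simp
  have hn' := h n hn
  rw [← norm_eq_abs, ← Complex.norm_real, ← sqrt_eq_rpow] at hn'
  simpa [Set.indicator_apply, sum_boole] using hn'

lemma sum_filter_ofReal_mul_cpow_neg_sub_eq (𝒟 : Set ℕ) {B : ℝ} (hB : 0 < B) (X : ℕ) (s : ℂ) :
    ∑ d ∈ (Icc 1 X).filter (· ∈ 𝒟), ((B * d : ℝ) : ℂ) ^ (-s) -
        (((Icc 1 X).filter (· ∈ 𝒟)).card : ℂ) * ((B * X : ℝ) : ℂ) ^ (-s) * (1 - s)⁻¹ =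
      (B : ℂ) ^ (-s) * (∑ d ∈ Icc 1 X, (𝒟.indicator 1 d : ℂ) * (d : ℂ) ^ (-s) -
        (∑ d ∈ Icc 1 X, (𝒟.indicator 1 d : ℂ)) * (X : ℂ) ^ (-s) * (1 - s)⁻¹) := by
  have hmul : ∀ y : ℕ, ((B * y : ℝ) : ℂ) ^ (-s) = (B : ℂ) ^ (-s) * (y : ℂ) ^ (-s) := fun y => by
    rw [Complex.ofReal_mul, Complex.mul_cpow_ofReal_nonneg hB.le (Nat.cast_nonneg y),
      Complex.ofReal_natCast]
  simp only [hmul, sum_filter, Set.indicator_apply, Pi.one_apply, ite_mul, one_mul, zero_mul,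
    sum_boole, mul_sub, mul_sum, mul_ite, mul_zero, sub_right_inj]
  ring

lemma ofReal_cpow_neg_div_eq_exp {y R : ℝ} (hy : 0 < y) (hR : R ≠ 0)
    (hyR : R = log (y / rexp 1)) (z : ℂ) : (y : ℂ) ^ (-(z / R)) = Complex.exp (-z - z / R) := by
  rw [log_div hy.ne' (exp_pos 1).ne', log_exp] at hyR
  have hR' : (R : ℂ) ≠ 0 := by exact_mod_cast hR
  rw [Complex.cpow_def_of_ne_zero (by exact_mod_cast hy.ne'), ← Complex.ofReal_log hy.le,
    show log y = R + 1 by linarith]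
  congr 1
  field_simp
  push_cast
  ring

theorem sum_power_over_family_general (𝒟 : Set ℕ) (c : ℝ) (M τ : ℝ)
    (hM : 0 < M)
    (hA : ∃ C : ℝ, ∀ u : ℕ, 1 ≤ u →
      |((((Finset.Icc 1 u).filter (· ∈ 𝒟)).card : ℝ) - c * u)| ≤ C * (u : ℝ) ^ ((1 : ℝ) / 2)) :
    (fun X : ℕ =>
        (∑ d ∈ (Finset.Icc 1 X).filter (· ∈ 𝒟),
            ((Real.sqrt M * d / (2 * π) : ℝ) : ℂ)
              ^ (-(2 * (π : ℂ) * Complex.I * (τ : ℂ))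
                  / ((Real.log (Real.sqrt M * X / (2 * π * Real.exp 1)) : ℝ) : ℂ)))
          - (((Finset.Icc 1 X).filter (· ∈ 𝒟)).card : ℝ)
              * Complex.exp (-(2 * (π : ℂ) * Complex.I * (τ : ℂ))
                  - 2 * (π : ℂ) * Complex.I * (τ : ℂ)
                      / ((Real.log (Real.sqrt M * X / (2 * π * Real.exp 1)) : ℝ) : ℂ))
              * (1 - 2 * (π : ℂ) * Complex.I * (τ : ℂ)
                  / ((Real.log (Real.sqrt M * X / (2 * π * Real.exp 1)) : ℝ) : ℂ))⁻¹)
      =O[atTop] (fun X : ℕ => (X : ℝ) ^ ((1 : ℝ) / 2)) := by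
  obtain ⟨C, hC⟩ := hA
  have ha := norm_sum_Icc_indicator_sub_le hC
  have hC0 : 0 ≤ C := (norm_nonneg _).trans (by simpa using ha 1)
  set B := √M / (2 * π)
  have hB : 0 < B := by positivity
  have hR : Tendsto (fun X : ℕ => log (√M * X / (2 * π * rexp 1))) atTop atTop :=
    tendsto_log_atTop.comp <| (tendsto_natCast_atTop_atTop.const_mul_atTop
      (sqrt_pos.2 hM)).atTop_div_const (by positivity)
  refine IsBigO.of_bound (4 * (|c| + C)) ?_
  filter_upwards [hR.eventually_ge_atTop (max 1 (2 * π * |τ|)), eventually_ge_atTop 1]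
    with X hRX hX
  set R := log (√M * X / (2 * π * rexp 1))
  have hR0 : 0 < R := one_pos.trans_le ((le_max_left _ _).trans hRX)
  have hRB : R = log (B * X / rexp 1) := congrArg log (by simp only [B]; ring)
  have hs : (2 * π * Complex.I * τ / R).re = 0 := by simp [Complex.div_ofReal_re]
  have hs1 : ‖2 * π * Complex.I * τ / R‖ ≤ 1 := by
    rw [norm_div, Complex.norm_real, norm_of_nonneg hR0.le, div_le_one hR0]
    simpa [abs_of_pos pi_pos] using (le_max_right _ _).trans hRX
  simp only [mul_div_right_comm √M]
  rw [neg_div, ← ofReal_cpow_neg_div_eq_exp (by positivity) hR0.ne' hRB, Complex.ofReal_natCast,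
    sum_filter_ofReal_mul_cpow_neg_sub_eq 𝒟 hB, norm_mul, norm_ofReal_cpow_neg_of_re_eq_zero hs hB,
    one_mul, norm_of_nonneg (by positivity), ← sqrt_eq_rpow]
  calc _ ≤ (2 + 2 * ‖2 * π * Complex.I * τ / R‖) * (‖(c : ℂ)‖ + C) * √X :=
        norm_sum_mul_cpow_neg_sub_le _ c ha hs hX
    _ ≤ 4 * (|c| + C) * √X := by
        rw [Complex.norm_real, norm_eq_abs]; gcongr; linarith

/-- If a set `𝒟` of positive integers has counting function `A(u) = cu + O(u^{1/2})`
(uniformly), then for fixed `τ ≠ 0`, `M > 0` and `R = log(√M X/(2πe))`,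
`∑_{d ∈ 𝒟, d ≤ X} (√M d/(2π))^{-2πiτ/R} = A(X)·e^{-2πiτ − 2πiτ/R}·(1 − 2πiτ/R)⁻¹
+ O(X^{1/2})`. -/
theorem sum_power_over_family (𝒟 : Set ℕ) (c : ℝ) (hc : 0 < c) (M τ : ℝ)
    (hM : 0 < M) (hτ : τ ≠ 0)
    (hA : ∃ C : ℝ, ∀ u : ℕ, 1 ≤ u →
      |((((Finset.Icc 1 u).filter (· ∈ 𝒟)).card : ℝ) - c * u)| ≤ C * (u : ℝ) ^ ((1 : ℝ) / 2)) :
    (fun X : ℕ =>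
        (∑ d ∈ (Finset.Icc 1 X).filter (· ∈ 𝒟),
            ((Real.sqrt M * d / (2 * π) : ℝ) : ℂ)
              ^ (-(2 * (π : ℂ) * Complex.I * (τ : ℂ))
                  / ((Real.log (Real.sqrt M * X / (2 * π * Real.exp 1)) : ℝ) : ℂ)))
          - (((Finset.Icc 1 X).filter (· ∈ 𝒟)).card : ℝ)
              * Complex.exp (-(2 * (π : ℂ) * Complex.I * (τ : ℂ))
                  - 2 * (π : ℂ) * Complex.I * (τ : ℂ)
                      / ((Real.log (Real.sqrt M * X / (2 * π * Real.exp 1)) : ℝ) : ℂ))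
              * (1 - 2 * (π : ℂ) * Complex.I * (τ : ℂ)
                  / ((Real.log (Real.sqrt M * X / (2 * π * Real.exp 1)) : ℝ) : ℂ))⁻¹)
      =O[atTop] (fun X : ℕ => (X : ℝ) ^ ((1 : ℝ) / 2)) :=
  sum_power_over_family_general 𝒟 c M τ hM hA
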